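/- Let n and l be integers with 0 < l < n. Then C(2l,l)·C(2n−2l,n−l)·n^n ≤ √2·(e/√(2π))^3 · C(2n,n)·C(n,l)·l^l·(n−l)^{n−l}, and in particular C(2l,l)·C(2n−2l,n−l)·n^n < 2·C(2n,n)·C(n,l)·l^l·(n−l)^{n−l}. -/

import Mathlib

/-!
Write `m! = σ m * (√(2m) (m/e)^m)` with Stirling's sequence `σ = Stirling.stirlingSeq`, which
decreases from `σ 1 = e/√2` towards its limit `√π`. Expanding all binomial coefficients into
factorials, the main terms `√(2m) (m/e)^m` cancel up to a factor `√2`, so with `k = n - l` the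
ratio of the two sides is `√2 σ(2l) σ(2k) σ(l+k) / (σ(2(l+k)) σ(l) σ(k))`: three factors at
most `e/√2` over three at least `√π`. Numerically `√2 (e/√(2π))³ ≈ 1.80 < 2`.
-/

open Real Nat Stirling

lemma stirlingSeq_nonneg (n : ℕ) : 0 ≤ stirlingSeq n := by unfold stirlingSeq; positivity

lemma stirlingSeq_le_exp_one_div_sqrt_two {n : ℕ} (hn : n ≠ 0) :
    stirlingSeq n ≤ exp 1 / √2 := by
  obtain ⟨m, rfl⟩ := Nat.exists_eq_succ_of_ne_zero hn
  simpa using stirlingSeq'_antitone (Nat.zero_le m)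

lemma stirlingSeq_mul_mul_le {a b c d e f : ℕ} (ha : a ≠ 0) (hb : b ≠ 0) (hc : c ≠ 0)
    (hd : d ≠ 0) (he : e ≠ 0) (hf : f ≠ 0) :
    stirlingSeq a * stirlingSeq b * stirlingSeq c ≤
      (exp 1 / √(2 * π)) ^ 3 * (stirlingSeq d * stirlingSeq e * stirlingSeq f) := by
  have h0 := stirlingSeq_nonneg
  calc stirlingSeq a * stirlingSeq b * stirlingSeq c ≤ (exp 1 / √2) ^ 3 := by
        rw [pow_three']
        exact mul_le_mul (mul_le_mul (stirlingSeq_le_exp_one_div_sqrt_two ha)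
          (stirlingSeq_le_exp_one_div_sqrt_two hb) (h0 b) (by positivity))
          (stirlingSeq_le_exp_one_div_sqrt_two hc) (h0 c) (by positivity)
    _ = (exp 1 / √(2 * π)) ^ 3 * √π ^ 3 := by
        rw [sqrt_mul zero_le_two]; field_simp
    _ ≤ _ := by
        rw [pow_three' √π]
        gcongr (exp 1 / √(2 * π)) ^ 3 * ?_
        exact mul_le_mul (mul_le_mul (sqrt_pi_le_stirlingSeq hd) (sqrt_pi_le_stirlingSeq he)
          (sqrt_nonneg π) (h0 d)) (sqrt_pi_le_stirlingSeq hf) (sqrt_nonneg π)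
          (mul_nonneg (h0 d) (h0 e))

noncomputable def stirlingDenom (n : ℕ) : ℝ := √(2 * n) * (n / exp 1) ^ n

lemma stirlingSeq_mul_stirlingDenom {n : ℕ} (hn : n ≠ 0) :
    stirlingSeq n * stirlingDenom n = n ! := by
  have : (0 : ℝ) < n := mod_cast Nat.pos_of_ne_zero hn
  exact div_mul_cancel₀ _ (by positivity)

lemma stirlingDenom_two_mul (m : ℕ) :
    stirlingDenom (2 * m) = √2 * (4 * m / exp 1) ^ m * stirlingDenom m := by
  simp only [stirlingDenom]
  push_cast
  rw [sqrt_mul zero_le_two, pow_mul]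
  ring

lemma stirlingDenom_two_mul_mul_two_mul (l k : ℕ) :
    stirlingDenom (2 * l) * stirlingDenom (2 * k) * stirlingDenom (l + k) *
        ((l + k : ℕ) : ℝ) ^ (l + k) =
      √2 * (stirlingDenom (2 * (l + k)) * stirlingDenom l * stirlingDenom k *
        (l : ℝ) ^ l * (k : ℝ) ^ k) := by
  simp only [stirlingDenom_two_mul, mul_pow, div_pow]
  push_cast
  ring

lemma factorial_two_mul_mul_factorial_two_mul_le {l k : ℕ} (hl : l ≠ 0) (hk : k ≠ 0) :
    ((2 * l)! : ℝ) * (2 * k)! * (l + k)! * ((l + k : ℕ) : ℝ) ^ (l + k) ≤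
      √2 * (exp 1 / √(2 * π)) ^ 3 * (2 * (l + k))! * l ! * k ! *
        (l : ℝ) ^ l * (k : ℝ) ^ k := by
  have hfac {m : ℕ} (hm : m ≠ 0) : (m ! : ℝ) = stirlingSeq m * stirlingDenom m :=
    (stirlingSeq_mul_stirlingDenom hm).symm
  rw [hfac (by omega : 2 * l ≠ 0), hfac (by omega : 2 * k ≠ 0), hfac (by omega : l + k ≠ 0),
    hfac (by omega : 2 * (l + k) ≠ 0), hfac hl, hfac hk]
  calc _ = stirlingSeq (2 * l) * stirlingSeq (2 * k) * stirlingSeq (l + k) *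
        (√2 * (stirlingDenom (2 * (l + k)) * stirlingDenom l * stirlingDenom k *
          (l : ℝ) ^ l * (k : ℝ) ^ k)) := by
        rw [← stirlingDenom_two_mul_mul_two_mul]; ring
    _ ≤ (exp 1 / √(2 * π)) ^ 3 *
          (stirlingSeq (2 * (l + k)) * stirlingSeq l * stirlingSeq k) *
        (√2 * (stirlingDenom (2 * (l + k)) * stirlingDenom l * stirlingDenom k *
          (l : ℝ) ^ l * (k : ℝ) ^ k)) := by
        refine mul_le_mul_of_nonneg_right (stirlingSeq_mul_mul_le ?_ ?_ ?_ ?_ hl hk) ?_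
        all_goals first | omega | unfold stirlingDenom; positivity
    _ = _ := by ring

lemma choose_two_mul_mul_choose_two_mul_mul_pow_le {l k : ℕ} (hl : l ≠ 0) (hk : k ≠ 0) :
    ((2 * l).choose l : ℝ) * (2 * k).choose k * ((l + k : ℕ) : ℝ) ^ (l + k) ≤
      √2 * (exp 1 / √(2 * π)) ^ 3 * (2 * (l + k)).choose (l + k) * (l + k).choose l *
        (l : ℝ) ^ l * (k : ℝ) ^ k := by
  have hcentral (m : ℕ) : ((2 * m).choose m : ℝ) * m ! * m ! = (2 * m)! := by
    rw [two_mul]; exact_mod_cast add_choose_mul_factorial_mul_factorial m m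
  have hchoose : ((l + k).choose l : ℝ) * l ! * k ! = (l + k)! := by
    rw [add_comm l k, mul_right_comm]; exact_mod_cast add_choose_mul_factorial_mul_factorial k l
  refine le_of_mul_le_mul_right ?_ (by positivity : (0 : ℝ) < l ! * l ! * k ! * k ! * (l + k)!)
  calc _ = ((2 * l)! : ℝ) * (2 * k)! * (l + k)! * ((l + k : ℕ) : ℝ) ^ (l + k) := by
        rw [← hcentral l, ← hcentral k]; ring
    _ ≤ √2 * (exp 1 / √(2 * π)) ^ 3 * (2 * (l + k))! * l ! * k ! *
          (l : ℝ) ^ l * (k : ℝ) ^ k :=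
        factorial_two_mul_mul_factorial_two_mul_le hl hk
    _ = _ := by rw [← hcentral (l + k), ← hchoose]; ring

lemma sqrt_two_mul_exp_one_div_sqrt_two_pi_pow_three_lt_two :
    √2 * (exp 1 / √(2 * π)) ^ 3 < 2 := by
  have h2 : √2 < 1.5 := by rw [sqrt_lt' (by norm_num)]; norm_num
  have hπ : 2.5 < √(2 * π) := by rw [lt_sqrt (by norm_num)]; linarith [pi_gt_d2]
  have he : exp 1 / √(2 * π) < 1.1 := by
    rw [div_lt_iff₀ (by positivity)]; linarith [exp_one_lt_d9]
  calc √2 * (exp 1 / √(2 * π)) ^ 3 < 1.5 * 1.1 ^ 3 := by gcongr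
    _ < 2 := by norm_num

/-- via Stirling bounds,
`C(2l,l)·C(2n−2l,n−l)·n^n ≤ √2·(e/√(2π))³·C(2n,n)·C(n,l)·l^l·(n−l)^{n−l}`,
and in particular the left-hand side is `< 2·C(2n,n)·C(n,l)·l^l·(n−l)^{n−l}`. -/
theorem central_binomial_ratio_bound (n l : ℕ) (hl : 0 < l) (hln : l < n) :
    ((2 * l).choose l : ℝ) * ((2 * n - 2 * l).choose (n - l) : ℝ) * (n : ℝ) ^ n ≤
        Real.sqrt 2 * (Real.exp 1 / Real.sqrt (2 * Real.pi)) ^ 3 *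
          ((2 * n).choose n : ℝ) * (n.choose l : ℝ) * (l : ℝ) ^ l *
          ((n : ℝ) - (l : ℝ)) ^ (n - l) ∧
      ((2 * l).choose l : ℝ) * ((2 * n - 2 * l).choose (n - l) : ℝ) * (n : ℝ) ^ n <
        2 * ((2 * n).choose n : ℝ) * (n.choose l : ℝ) * (l : ℝ) ^ l *
          ((n : ℝ) - (l : ℝ)) ^ (n - l) := by
  obtain ⟨k, hk, rfl⟩ : ∃ k, 0 < k ∧ n = l + k := ⟨n - l, by omega, by omega⟩
  rw [show 2 * (l + k) - 2 * l = 2 * k by omega, Nat.add_sub_cancel_left, Nat.cast_add,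
    add_sub_cancel_left]
  have hle := choose_two_mul_mul_choose_two_mul_mul_pow_le hl.ne' hk.ne'
  push_cast at hle
  refine ⟨hle, hle.trans_lt ?_⟩
  have hpos : (0 : ℝ) <
      (2 * (l + k)).choose (l + k) * (l + k).choose l * (l : ℝ) ^ l * (k : ℝ) ^ k := by
    have : (0 : ℝ) < (2 * (l + k)).choose (l + k) := mod_cast Nat.choose_pos (by omega)
    have : (0 : ℝ) < (l + k).choose l := mod_cast Nat.choose_pos (by omega)
    have : (0 : ℝ) < k := mod_cast hk
    positivity
  linarith [mul_lt_mul_of_pos_right sqrt_two_mul_exp_one_div_sqrt_two_pi_pow_three_lt_two hpos]
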